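/- arXiv:1511.02388 — 3 statements merged into one kernel-verified Lean document; each statement's English description precedes it below -/
import Mathlib

section
/- Let y_1, ..., y_M be M non-negative real numbers and let σ_d denote the d-th elementary symmetric function of the y_k. Then for each positive integer d ≤ M, σ_d ≥ (σ_1^d / d!) · (1 - C(d,2) · (∑_{k=1}^M y_k²) / σ_1²), where σ_1 = ∑ y_k (assuming σ_1 > 0). -/
/-!
Write `σₙ` for the elementary symmetric sums of the `yᵢ`, `p₁ = ∑ yᵢ` and `p₂ = ∑ yᵢ²`.
Multiplying `∏_{i ∈ A} yᵢ` by `p₁` and splitting `p₁` into the parts over `i ∉ A` and `i ∈ A`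
gives `p₁ σₙ = (n + 1) σₙ₊₁ + Rₙ` with `Rₙ = ∑_{|A| = n} (∑_{i ∈ A} yᵢ) ∏_{i ∈ A} yᵢ`, and
`0 ≤ Rₙ₊₁ ≤ p₂ σₙ` by the same double counting. Then `Rₙ ≥ 0` gives `n! σₙ ≤ p₁ⁿ`; feeding
this into `Rₙ₊₁ ≤ p₂ σₙ`, induction on `n` yields `p₁ⁿ (p₁² - C(n,2) p₂) ≤ p₁² n! σₙ`.
-/

open Finset Nat

namespace Finset

variable {ι : Type*} [DecidableEq ι]

theorem sum_powersetCard_sum_sdiff {M : Type*} [AddCommMonoid M] (s : Finset ι) (n : ℕ)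
    (f : ι → Finset ι → M) :
    ∑ A ∈ s.powersetCard n, ∑ k ∈ s \ A, f k A =
      ∑ B ∈ s.powersetCard (n + 1), ∑ k ∈ B, f k (B.erase k) := by
  rw [sum_sigma', sum_sigma']
  refine sum_nbij' (fun x ↦ ⟨insert x.2 x.1, x.2⟩) (fun x ↦ ⟨x.1.erase x.2, x.2⟩)
    ?_ ?_ ?_ ?_ ?_
  · rintro ⟨A, k⟩ hx
    simp only [mem_sigma, mem_powersetCard, mem_sdiff] at hx ⊢
    obtain ⟨⟨hAs, rfl⟩, hks, hkA⟩ := hx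
    exact ⟨⟨insert_subset hks hAs, card_insert_of_notMem hkA⟩, mem_insert_self _ _⟩
  · rintro ⟨B, k⟩ hx
    simp only [mem_sigma, mem_powersetCard, mem_sdiff] at hx ⊢
    obtain ⟨⟨hBs, hBc⟩, hkB⟩ := hx
    refine ⟨⟨(erase_subset _ _).trans hBs, ?_⟩, hBs hkB, notMem_erase _ _⟩
    rw [card_erase_of_mem hkB, hBc, Nat.add_sub_cancel]
  · rintro ⟨A, k⟩ hx
    simp only [mem_sigma, mem_sdiff] at hx
    simp [erase_insert hx.2.2]
  · rintro ⟨B, k⟩ hx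
    simp only [mem_sigma] at hx
    simp [insert_erase hx.2]
  · rintro ⟨A, k⟩ hx
    simp only [mem_sigma, mem_sdiff] at hx
    simp [erase_insert hx.2.2]

section CommSemiring

variable {R : Type*} [CommSemiring R] (s : Finset ι) (y : ι → R)

theorem sum_mul_sum_powersetCard_prod (n : ℕ) :
    (∑ i ∈ s, y i) * ∑ A ∈ s.powersetCard n, ∏ i ∈ A, y i =
      (n + 1) * ∑ A ∈ s.powersetCard (n + 1), ∏ i ∈ A, y i +
        ∑ A ∈ s.powersetCard n, (∑ i ∈ A, y i) * ∏ i ∈ A, y i := by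
  have houtside : ∑ A ∈ s.powersetCard n, (∑ i ∈ s \ A, y i) * ∏ i ∈ A, y i =
      (n + 1) * ∑ A ∈ s.powersetCard (n + 1), ∏ i ∈ A, y i := by
    simp_rw [sum_mul]
    rw [sum_powersetCard_sum_sdiff, mul_sum]
    refine sum_congr rfl fun B hB ↦ ?_
    rw [sum_congr rfl fun k hk ↦ mul_prod_erase B y hk, sum_const,
      (mem_powersetCard.1 hB).2, nsmul_eq_mul]
    push_cast
    ring
  rw [mul_sum, ← houtside, ← sum_add_distrib]
  refine sum_congr rfl fun A hA ↦ ?_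
  rw [← add_mul, sum_sdiff (mem_powersetCard.1 hA).1]

end CommSemiring

section OrderedSemiring

variable {R : Type*} [CommSemiring R] [PartialOrder R] [IsOrderedRing R]
  (s : Finset ι) {y : ι → R} (hy : ∀ i, 0 ≤ y i)
include hy

theorem sum_powersetCard_sum_mul_prod_le (n : ℕ) :
    ∑ A ∈ s.powersetCard (n + 1), (∑ i ∈ A, y i) * ∏ i ∈ A, y i ≤
      (∑ i ∈ s, y i ^ 2) * ∑ A ∈ s.powersetCard n, ∏ i ∈ A, y i :=
  calc ∑ A ∈ s.powersetCard (n + 1), (∑ i ∈ A, y i) * ∏ i ∈ A, y i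
      = ∑ B ∈ s.powersetCard (n + 1), ∑ k ∈ B, y k ^ 2 * ∏ i ∈ B.erase k, y i := by
        refine sum_congr rfl fun B _ ↦ ?_
        rw [sum_mul]
        refine sum_congr rfl fun k hk ↦ ?_
        rw [← mul_prod_erase B y hk]
        ring
    _ = ∑ A ∈ s.powersetCard n, ∑ k ∈ s \ A, y k ^ 2 * ∏ i ∈ A, y i :=
        (sum_powersetCard_sum_sdiff s n fun k A ↦ y k ^ 2 * ∏ i ∈ A, y i).symm
    _ ≤ ∑ A ∈ s.powersetCard n, ∑ k ∈ s, y k ^ 2 * ∏ i ∈ A, y i :=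
        sum_le_sum fun A _ ↦ sum_le_sum_of_subset_of_nonneg sdiff_subset fun k _ _ ↦
          mul_nonneg (pow_nonneg (hy k) 2) (prod_nonneg fun i _ ↦ hy i)
    _ = (∑ i ∈ s, y i ^ 2) * ∑ A ∈ s.powersetCard n, ∏ i ∈ A, y i := by
        simp_rw [← sum_mul, mul_sum]

theorem factorial_mul_sum_powersetCard_prod_le (n : ℕ) :
    n ! * ∑ A ∈ s.powersetCard n, ∏ i ∈ A, y i ≤ (∑ i ∈ s, y i) ^ n := by
  induction n with
  | zero => simp
  | succ n ih =>
    have hstep : (n + 1) * ∑ A ∈ s.powersetCard (n + 1), ∏ i ∈ A, y i ≤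
        (∑ i ∈ s, y i) * ∑ A ∈ s.powersetCard n, ∏ i ∈ A, y i := by
      rw [sum_mul_sum_powersetCard_prod]
      exact le_add_of_nonneg_right <| sum_nonneg fun A _ ↦
        mul_nonneg (sum_nonneg fun i _ ↦ hy i) (prod_nonneg fun i _ ↦ hy i)
    calc ((n + 1)! : R) * ∑ A ∈ s.powersetCard (n + 1), ∏ i ∈ A, y i
        = n ! * ((n + 1) * ∑ A ∈ s.powersetCard (n + 1), ∏ i ∈ A, y i) := by
          push_cast [factorial_succ]
          ring
      _ ≤ n ! * ((∑ i ∈ s, y i) * ∑ A ∈ s.powersetCard n, ∏ i ∈ A, y i) :=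
          mul_le_mul_of_nonneg_left hstep (Nat.cast_nonneg _)
      _ = (∑ i ∈ s, y i) * (n ! * ∑ A ∈ s.powersetCard n, ∏ i ∈ A, y i) := by ring
      _ ≤ (∑ i ∈ s, y i) * (∑ i ∈ s, y i) ^ n :=
          mul_le_mul_of_nonneg_left ih (sum_nonneg fun i _ ↦ hy i)
      _ = (∑ i ∈ s, y i) ^ (n + 1) := by ring

/-- `n! Rₙ ≤ n p₂ p₁ⁿ⁻¹`, multiplied by `p₁` to avoid truncated subtraction at `n = 0`. -/
theorem factorial_mul_sum_powersetCard_sum_mul_prod_mul_le (n : ℕ) :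
    n ! * (∑ A ∈ s.powersetCard n, (∑ i ∈ A, y i) * ∏ i ∈ A, y i) * ∑ i ∈ s, y i ≤
      n * (∑ i ∈ s, y i ^ 2) * (∑ i ∈ s, y i) ^ n := by
  cases n with
  | zero => simp
  | succ n =>
    have hR := sum_powersetCard_sum_mul_prod_le s hy n
    have hE := factorial_mul_sum_powersetCard_prod_le s hy n
    have hp1 : 0 ≤ ∑ i ∈ s, y i := sum_nonneg fun i _ ↦ hy i
    have hp2 : 0 ≤ ∑ i ∈ s, y i ^ 2 := sum_nonneg fun i _ ↦ pow_nonneg (hy i) 2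
    calc ((n + 1)! : R) * (∑ A ∈ s.powersetCard (n + 1), (∑ i ∈ A, y i) * ∏ i ∈ A, y i) *
          ∑ i ∈ s, y i
        = ((n + 1 : ℕ) * n ! : R) *
            ((∑ A ∈ s.powersetCard (n + 1), (∑ i ∈ A, y i) * ∏ i ∈ A, y i) * ∑ i ∈ s, y i) := by
          rw [factorial_succ, Nat.cast_mul, mul_assoc]
      _ ≤ ((n + 1 : ℕ) * n ! : R) *
            ((∑ i ∈ s, y i ^ 2) * (∑ A ∈ s.powersetCard n, ∏ i ∈ A, y i) * ∑ i ∈ s, y i) :=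
          mul_le_mul_of_nonneg_left (mul_le_mul_of_nonneg_right hR hp1) (by positivity)
      _ = ((n + 1 : ℕ) : R) * ((∑ i ∈ s, y i ^ 2) * ∑ i ∈ s, y i) *
            (n ! * ∑ A ∈ s.powersetCard n, ∏ i ∈ A, y i) := by ring
      _ ≤ ((n + 1 : ℕ) : R) * ((∑ i ∈ s, y i ^ 2) * ∑ i ∈ s, y i) * (∑ i ∈ s, y i) ^ n :=
          mul_le_mul_of_nonneg_left hE (mul_nonneg (Nat.cast_nonneg _) (mul_nonneg hp2 hp1))
      _ = ((n + 1 : ℕ) : R) * (∑ i ∈ s, y i ^ 2) * (∑ i ∈ s, y i) ^ (n + 1) := by ring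

end OrderedSemiring

section OrderedRing

variable {R : Type*} [CommRing R] [PartialOrder R] [IsOrderedRing R]
  (s : Finset ι) {y : ι → R} (hy : ∀ i, 0 ≤ y i)
include hy

theorem pow_mul_sub_choose_mul_le (n : ℕ) :
    (∑ i ∈ s, y i) ^ n * ((∑ i ∈ s, y i) ^ 2 - n.choose 2 * ∑ i ∈ s, y i ^ 2) ≤
      (∑ i ∈ s, y i) ^ 2 * (n ! * ∑ A ∈ s.powersetCard n, ∏ i ∈ A, y i) := by
  induction n with
  | zero => simp
  | succ n ih =>
    have hp1 : 0 ≤ ∑ i ∈ s, y i := sum_nonneg fun i _ ↦ hy i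
    have hchoose : ((n + 1).choose 2 : R) = n.choose 2 + n := by
      rw [choose_succ_succ', choose_one_right, Nat.cast_add, add_comm]
    have hR := factorial_mul_sum_powersetCard_sum_mul_prod_mul_le s hy n
    rw [hchoose, factorial_succ]
    push_cast
    linear_combination mul_le_mul_of_nonneg_left ih hp1 + mul_le_mul_of_nonneg_left hR hp1 +
      ((∑ i ∈ s, y i) ^ 2 * n !) * sum_mul_sum_powersetCard_prod s y n

end OrderedRing

end Finset

theorem stmt_0_general (M : ℕ) (y : ℕ → ℝ) (hy : ∀ k, 0 ≤ y k)
    (d : ℕ)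
    (hσ1 : 0 < ∑ k ∈ Finset.range M, y k) :
    ((∑ k ∈ Finset.range M, y k) ^ d / (Nat.factorial d)) *
      (1 - (d.choose 2) * (∑ k ∈ Finset.range M, (y k) ^ 2) /
        (∑ k ∈ Finset.range M, y k) ^ 2)
    ≤ ∑ A ∈ (Finset.range M).powersetCard d, ∏ k ∈ A, y k := by
  set σ₁ := ∑ k ∈ range M, y k
  have hbound := pow_mul_sub_choose_mul_le (range M) hy d
  calc σ₁ ^ d / d ! * (1 - d.choose 2 * (∑ k ∈ range M, y k ^ 2) / σ₁ ^ 2)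
      = σ₁ ^ d * (σ₁ ^ 2 - d.choose 2 * ∑ k ∈ range M, y k ^ 2) / (σ₁ ^ 2 * d !) := by
        field_simp
    _ ≤ ∑ A ∈ (range M).powersetCard d, ∏ k ∈ A, y k := by
        rw [div_le_iff₀ (by positivity)]
        linarith

/-- Lemma (Halberstam–Roth): lower bound for elementary symmetric functions. -/
theorem stmt_0 (M : ℕ) (y : ℕ → ℝ) (hy : ∀ k, 0 ≤ y k)
    (d : ℕ) (hd : 1 ≤ d) (hdM : d ≤ M)
    (hσ1 : 0 < ∑ k ∈ Finset.range M, y k) :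
    ((∑ k ∈ Finset.range M, y k) ^ d / (Nat.factorial d)) *
      (1 - (d.choose 2) * (∑ k ∈ Finset.range M, (y k) ^ 2) /
        (∑ k ∈ Finset.range M, y k) ^ 2)
    ≤ ∑ A ∈ (Finset.range M).powersetCard d, ∏ k ∈ A, y k :=
  stmt_0_general M y hy d hσ1
end

section
/- Let a be a positive integer and let π be a prime of ℤ[i] with π ≡ 1 (mod (1+i)³) lying over a rational prime p ≡ 1 (mod 4). Then a divides the norm ‖π − 1‖ if and only if π − 1 is divisible in ℤ[i] by some element α of the set S_a. -/
/-- A typical element of the set `S_a`: given `a = ∏ q^{v_q}`, a choice `πq` of Gaussian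
primes above the primes `q ≡ 1 (mod 4)`, and a choice of exponents `f`, the element
`(1+i)^{v_2} · ∏_{q ≡ 3 (4)} q^{⌈v_q/2⌉} · ∏_{q ≡ 1 (4)} πq^{f q} · π̄q^{v_q - f q}`. -/
noncomputable def SaElem (a : ℕ) (πq : ℕ → GaussianInt) (f : ℕ → ℕ) : GaussianInt :=
  (1 + Zsqrtd.sqrtd) ^ (a.factorization 2) *
    (∏ q ∈ a.primeFactors.filter (fun q => q % 4 = 3),
      (q : GaussianInt) ^ ((a.factorization q + 1) / 2)) *
    (∏ q ∈ a.primeFactors.filter (fun q => q % 4 = 1),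
      (πq q) ^ (f q) * (star (πq q)) ^ (a.factorization q - f q))

/-- The set `S_a` of Gaussian integers. -/
noncomputable def Sa (a : ℕ) (πq : ℕ → GaussianInt) : Set GaussianInt :=
  {α | ∃ f : ℕ → ℕ, (∀ q, f q ≤ a.factorization q) ∧ α = SaElem a πq f}

/-!
Since `‖x‖ = x · x̄`, the condition `a ∣ ‖x‖` splits into the conditions `q^{v_q} ∣ x x̄`, and
divisibility of `x` by an element of `S_a` splits likewise, because the `q`-parts of such an
element divide `q^{v_q}` and are therefore pairwise coprime. Each prime is then handled through
multiplicities. For `q = 2` and `q ≡ 3 (mod 4)` the Gaussian prime `ϖ` above `q` (`1 + i`,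
resp. `q`) is associated to its conjugate, so `v_ϖ(x x̄) = 2 v_ϖ(x)`, which gives the exponents
`v_2` and `⌈v_q/2⌉`. For `q = π π̄ ≡ 1 (mod 4)` the primes `π` and `π̄` are coprime, and
`q^v ∣ x x̄` means `v_π(x) + v_π̄(x) ≥ v`, i.e. `π^f π̄^{v-f} ∣ x` for some `f ≤ v`.
-/

theorem Nat.Prime.eq_two_or_mod_four_eq_three_or_one {q : ℕ} (hq : q.Prime) :
    q = 2 ∨ q % 4 = 3 ∨ q % 4 = 1 := by
  rcases hq.eq_two_or_odd with h | h <;> omega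

theorem Finset.prod_dvd_iff_of_pairwise_isCoprime {ι R : Type*} [CommSemiring R] {s : Finset ι}
    {g : ι → R} (hs : (s : Set ι).Pairwise (Function.onFun IsCoprime g)) {z : R} :
    ∏ i ∈ s, g i ∣ z ↔ ∀ i ∈ s, g i ∣ z :=
  ⟨fun h _ hi => (Finset.dvd_prod_of_mem g hi).trans h, Finset.prod_dvd_of_coprime hs⟩

theorem Finset.forall_mem_exists_le_iff {ι : Type*} {s : Finset ι} {v : ι → ℕ}
    {P : ι → ℕ → Prop} :
    (∀ i ∈ s, ∃ f ≤ v i, P i f) ↔ ∃ f : ι → ℕ, (∀ i, f i ≤ v i) ∧ ∀ i ∈ s, P i (f i) := by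
  classical
  refine ⟨fun h => ?_, fun ⟨f, hfv, hf⟩ i hi => ⟨f i, hfv i, hf i hi⟩⟩
  choose! f hfv hf using h
  refine ⟨fun i => if i ∈ s then f i else 0, fun i => ?_, fun i hi => by simpa [hi] using hf i hi⟩
  dsimp only
  split_ifs with hi
  exacts [hfv i hi, Nat.zero_le _]

theorem Int.natCast_dvd_iff_forall_primeFactors {a : ℕ} (ha : a ≠ 0) {n : ℤ} :
    (a : ℤ) ∣ n ↔ ∀ q ∈ a.primeFactors, (q : ℤ) ^ a.factorization q ∣ n := by
  conv_lhs => rw [← Nat.prod_factorization_pow_eq_self ha]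
  rw [Nat.prod_factorization_eq_prod_primeFactors, Nat.cast_prod]
  push_cast
  refine Finset.prod_dvd_iff_of_pairwise_isCoprime fun q hq q' hq' hne => ?_
  exact Nat.isCoprime_iff_coprime.mpr (((Nat.coprime_primes (Nat.prime_of_mem_primeFactors hq)
    (Nat.prime_of_mem_primeFactors hq')).mpr hne).pow _ _)

section StarMultiplicity

variable {R : Type*}

theorem emultiplicity_star_of_associated [CommMonoid R] [StarMul R] {ϖ : R}
    (h : Associated (star ϖ) ϖ) (x : R) : emultiplicity ϖ (star x) = emultiplicity ϖ x := by
  rw [← emultiplicity_map_eq (starMulAut : R ≃* R) (a := ϖ) (b := x),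
    emultiplicity_eq_emultiplicity_iff]
  exact fun n => (h.pow_pow (n := n)).dvd_iff_dvd_left.symm

theorem mul_star_dvd_mul_star [CommMonoid R] [StarMul R] {α x : R} (h : α ∣ x) :
    α * star α ∣ x * star x :=
  mul_dvd_mul h (map_dvd (starMulAut : R ≃* R) h)

theorem pow_dvd_mul_star_iff_of_associated [CommMonoidWithZero R] [IsCancelMulZero R]
    [WfDvdMonoid R] [StarMul R] {ϖ x : R} (hϖ : Prime ϖ) (hstar : Associated (star ϖ) ϖ)
    (hx : x ≠ 0) (v : ℕ) : ϖ ^ v ∣ x * star x ↔ ϖ ^ ((v + 1) / 2) ∣ x := by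
  have hfin : FiniteMultiplicity ϖ x := .of_not_isUnit hϖ.not_isUnit hx
  rw [pow_dvd_iff_le_emultiplicity, emultiplicity_mul hϖ, emultiplicity_star_of_associated hstar,
    hfin.emultiplicity_eq_multiplicity, hfin.pow_dvd_iff_le_multiplicity, ← Nat.cast_add,
    Nat.cast_le]
  omega

theorem exists_pow_mul_star_pow_dvd_of_pow_dvd_mul_star [CommSemiring R] [IsCancelMulZero R]
    [WfDvdMonoid R] [StarMul R] {ϖ x : R} (hϖ : Prime ϖ) (hcop : IsCoprime ϖ (star ϖ))
    (hx : x ≠ 0) {v : ℕ} (h : ϖ ^ v ∣ x * star x) :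
    ∃ f ≤ v, ϖ ^ f * star ϖ ^ (v - f) ∣ x := by
  have hϖ' : Prime (star ϖ) := (MulEquiv.prime_iff (starMulAut : R ≃* R)).mpr hϖ
  have hfin : FiniteMultiplicity ϖ x := .of_not_isUnit hϖ.not_isUnit hx
  have hfin' : FiniteMultiplicity (star ϖ) x := .of_not_isUnit hϖ'.not_isUnit hx
  have hstar : emultiplicity ϖ (star x) = emultiplicity (star ϖ) x := by
    simpa using emultiplicity_map_eq (starMulAut : R ≃* R) (a := star ϖ) (b := x)
  rw [pow_dvd_iff_le_emultiplicity, emultiplicity_mul hϖ, hstar,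
    hfin.emultiplicity_eq_multiplicity, hfin'.emultiplicity_eq_multiplicity, ← Nat.cast_add,
    Nat.cast_le] at h
  refine ⟨min v (multiplicity ϖ x), min_le_left _ _, hcop.pow.mul_dvd ?_ ?_⟩
  · exact (pow_dvd_pow _ (min_le_right _ _)).trans (pow_multiplicity_dvd ϖ x)
  · exact (pow_dvd_pow _ (by omega)).trans (pow_multiplicity_dvd (star ϖ) x)

end StarMultiplicity

local notation "ℤ[i]" => GaussianInt

namespace GaussianInt

open Zsqrtd

theorem prime_of_natAbs_norm_prime {z : ℤ[i]} (h : z.norm.natAbs.Prime) : Prime z := by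
  rw [← irreducible_iff_prime]
  refine ⟨fun hu => h.ne_one (norm_eq_one_iff.mpr hu), fun u w huw => ?_⟩
  rw [huw, norm_mul, Int.natAbs_mul, Nat.prime_mul_iff] at h
  rcases h with ⟨-, hw⟩ | ⟨-, hu⟩
  · exact .inr (norm_eq_one_iff.mp hw)
  · exact .inl (norm_eq_one_iff.mp hu)

theorem prime_of_norm_eq_prime {z : ℤ[i]} {q : ℕ} (hq : q.Prime) (hnorm : z.norm = q) :
    Prime z :=
  prime_of_natAbs_norm_prime (by rwa [hnorm, Int.natAbs_natCast])

theorem prime_one_add_sqrtd : Prime (1 + sqrtd : ℤ[i]) :=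
  prime_of_norm_eq_prime Nat.prime_two (by decide)

theorem associated_star_one_add_sqrtd : Associated (star (1 + sqrtd)) (1 + sqrtd : ℤ[i]) :=
  ⟨⟨sqrtd, -sqrtd, by decide, by decide⟩, by decide⟩

theorem associated_one_add_sqrtd_sq_two : Associated ((1 + sqrtd) ^ 2) (2 : ℤ[i]) :=
  ⟨⟨-sqrtd, sqrtd, by decide, by decide⟩, by decide⟩

theorem natCast_dvd_of_dvd_intCast {ϖ : ℤ[i]} {q : ℕ} (hq : q.Prime) (hnorm : ϖ.norm = q)
    {n : ℤ} (h : ϖ ∣ n) : (q : ℤ) ∣ n := by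
  have hnn : ϖ.norm ∣ (n : ℤ[i]).norm := map_dvd normMonoidHom h
  rw [hnorm, norm_intCast] at hnn
  exact (Nat.prime_iff_prime_int.mp hq).dvd_of_dvd_pow (n := 2) (by rwa [sq])

/-- A common prime factor of `ϖ` and `ϖ̄` divides `2 re ϖ = ϖ + ϖ̄` and `2 im ϖ = i (ϖ̄ - ϖ)`,
which forces `q ∣ re ϖ` and `q ∣ im ϖ`, hence `q² ∣ ‖ϖ‖ = q`. -/
theorem isCoprime_star_of_norm_eq_prime {ϖ : ℤ[i]} {q : ℕ} (hq : q.Prime) (hq2 : q ≠ 2)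
    (hnorm : ϖ.norm = q) : IsCoprime ϖ (star ϖ) := by
  refine (dvd_or_isCoprime _ _ (prime_of_norm_eq_prime hq hnorm).irreducible).resolve_left
    fun hdvd => ?_
  have hre : ((2 * ϖ.re : ℤ) : ℤ[i]) = ϖ + star ϖ := by ext <;> simp; ring
  have him : ((2 * ϖ.im : ℤ) : ℤ[i]) = (ϖ - star ϖ) * -sqrtd := by ext <;> simp; ring
  have hq' : Prime (q : ℤ) := Nat.prime_iff_prime_int.mp hq
  have hq2' : ¬(q : ℤ) ∣ 2 := by
    rw [show (2 : ℤ) = (2 : ℕ) from rfl, Int.natCast_dvd_natCast]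
    exact fun h => hq2 ((Nat.prime_dvd_prime_iff_eq hq Nat.prime_two).mp h)
  have hre_dvd : (q : ℤ) ∣ ϖ.re := (hq'.dvd_mul.mp (natCast_dvd_of_dvd_intCast hq hnorm
    (hre ▸ dvd_add dvd_rfl hdvd))).resolve_left hq2'
  have him_dvd : (q : ℤ) ∣ ϖ.im := (hq'.dvd_mul.mp (natCast_dvd_of_dvd_intCast hq hnorm
    (him ▸ (dvd_sub dvd_rfl hdvd).mul_right _))).resolve_left hq2'
  have hsq : (q : ℤ) * q ∣ ϖ.norm := by
    rw [show ϖ.norm = ϖ.re * ϖ.re + ϖ.im * ϖ.im by rw [norm_def]; ring]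
    exact dvd_add (mul_dvd_mul hre_dvd hre_dvd) (mul_dvd_mul him_dvd him_dvd)
  rw [hnorm] at hsq
  exact hq'.not_isUnit (isUnit_of_dvd_one
    ((mul_dvd_mul_iff_left (Nat.cast_ne_zero.mpr hq.ne_zero)).mp (by simpa using hsq)))

theorem norm_eq_of_mul_star_eq {ϖ : ℤ[i]} {n : ℤ} (h : ϖ * star ϖ = n) : ϖ.norm = n := by
  rw [← norm_eq_mul_conj] at h
  exact_mod_cast h

theorem intCast_dvd_norm_iff {n : ℤ} {x : ℤ[i]} :
    n ∣ x.norm ↔ (n : ℤ[i]) ∣ x * star x := by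
  rw [← norm_eq_mul_conj, intCast_dvd_intCast]

variable {x : ℤ[i]}

theorem two_pow_dvd_mul_star_iff (hx : x ≠ 0) (v : ℕ) :
    (2 : ℤ[i]) ^ v ∣ x * star x ↔ (1 + sqrtd) ^ v ∣ x := by
  rw [← (associated_one_add_sqrtd_sq_two.pow_pow (n := v)).dvd_iff_dvd_left, ← pow_mul,
    pow_dvd_mul_star_iff_of_associated prime_one_add_sqrtd associated_star_one_add_sqrtd hx,
    show (2 * v + 1) / 2 = v by omega]

theorem natCast_pow_dvd_mul_star_iff_of_mod_four_eq_three {q : ℕ} (hq : q.Prime) (hq3 : q % 4 = 3)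
    (hx : x ≠ 0) (v : ℕ) :
    (q : ℤ[i]) ^ v ∣ x * star x ↔ (q : ℤ[i]) ^ ((v + 1) / 2) ∣ x :=
  haveI := Fact.mk hq
  pow_dvd_mul_star_iff_of_associated (prime_of_nat_prime_of_mod_four_eq_three q hq3)
    (by rw [star_natCast]; rfl) hx v

theorem natCast_pow_dvd_mul_star_iff_of_mul_star_eq {q : ℕ} (hq : q.Prime) (hq2 : q ≠ 2)
    {ϖ : ℤ[i]} (hϖ : ϖ * star ϖ = q) (hx : x ≠ 0) (v : ℕ) :
    (q : ℤ[i]) ^ v ∣ x * star x ↔ ∃ f ≤ v, ϖ ^ f * star ϖ ^ (v - f) ∣ x := by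
  have hnorm : ϖ.norm = q := norm_eq_of_mul_star_eq (by exact_mod_cast hϖ)
  constructor
  · intro h
    exact exists_pow_mul_star_pow_dvd_of_pow_dvd_mul_star (prime_of_norm_eq_prime hq hnorm)
      (isCoprime_star_of_norm_eq_prime hq hq2 hnorm)
      hx ((pow_dvd_pow_of_dvd (Dvd.intro _ hϖ) v).trans h)
  · rintro ⟨f, hf, h⟩
    have hconj : ϖ ^ f * star ϖ ^ (v - f) * star (ϖ ^ f * star ϖ ^ (v - f)) = (q : ℤ[i]) ^ v := by
      rw [← hϖ, ← Nat.add_sub_cancel' hf, star_mul', star_pow, star_pow, star_star, mul_pow,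
        pow_add, pow_add, Nat.add_sub_cancel_left]
      ring
    exact hconj ▸ mul_star_dvd_mul_star h

end GaussianInt

open Zsqrtd GaussianInt

/-- The `q`-part of an element of `S_a`, where `v = v_q` and `f` is the exponent of `ϖ = π_q`. -/
noncomputable def saFactor (ϖ : ℤ[i]) (q v f : ℕ) : ℤ[i] :=
  if q = 2 then (1 + sqrtd) ^ v
  else if q % 4 = 3 then (q : ℤ[i]) ^ ((v + 1) / 2)
  else ϖ ^ f * star ϖ ^ (v - f)

section saFactor

variable {q v : ℕ} {ϖ : ℤ[i]}

theorem natCast_pow_dvd_mul_star_iff_exists_saFactor_dvd (hq : q.Prime)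
    (hϖ : q % 4 = 1 → ϖ * star ϖ = q) {x : ℤ[i]} (hx : x ≠ 0) :
    (q : ℤ[i]) ^ v ∣ x * star x ↔ ∃ f ≤ v, saFactor ϖ q v f ∣ x := by
  rcases hq.eq_two_or_mod_four_eq_three_or_one with rfl | hq3 | hq1
  · simp only [saFactor, if_pos, Nat.cast_ofNat, two_pow_dvd_mul_star_iff hx]
    exact ⟨fun h => ⟨0, v.zero_le, h⟩, fun ⟨_, _, h⟩ => h⟩
  · simp only [saFactor, if_neg (show q ≠ 2 by omega), if_pos hq3,
      natCast_pow_dvd_mul_star_iff_of_mod_four_eq_three hq hq3 hx]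
    exact ⟨fun h => ⟨0, v.zero_le, h⟩, fun ⟨_, _, h⟩ => h⟩
  · simp only [saFactor, if_neg (show q ≠ 2 by omega), if_neg (show q % 4 ≠ 3 by omega)]
    exact natCast_pow_dvd_mul_star_iff_of_mul_star_eq hq (by omega) (hϖ hq1) hx v

theorem saFactor_dvd_natCast_pow (hq : q.Prime) (hϖ : q % 4 = 1 → ϖ * star ϖ = q) {f : ℕ}
    (hf : f ≤ v) : saFactor ϖ q v f ∣ (q : ℤ[i]) ^ v := by
  rcases hq.eq_two_or_mod_four_eq_three_or_one with rfl | hq3 | hq1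
  · simp only [saFactor, if_pos, Nat.cast_ofNat]
    exact pow_dvd_pow_of_dvd ⟨1 - sqrtd, by decide⟩ v
  · simp only [saFactor, if_neg (show q ≠ 2 by omega), if_pos hq3]
    exact pow_dvd_pow _ (by omega)
  · simp only [saFactor, if_neg (show q ≠ 2 by omega), if_neg (show q % 4 ≠ 3 by omega)]
    rw [← Nat.add_sub_cancel' hf, pow_add, Nat.add_sub_cancel_left]
    exact mul_dvd_mul (pow_dvd_pow_of_dvd (Dvd.intro _ (hϖ hq1)) f)
      (pow_dvd_pow_of_dvd (Dvd.intro_left _ (hϖ hq1)) _)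

theorem isCoprime_saFactor {q' v' f f' : ℕ} {ϖ' : ℤ[i]} (hq : q.Prime) (hq' : q'.Prime)
    (hne : q ≠ q') (hϖ : q % 4 = 1 → ϖ * star ϖ = q) (hϖ' : q' % 4 = 1 → ϖ' * star ϖ' = q')
    (hf : f ≤ v) (hf' : f' ≤ v') : IsCoprime (saFactor ϖ q v f) (saFactor ϖ' q' v' f') := by
  have hcop : IsCoprime ((q : ℤ[i]) ^ v) ((q' : ℤ[i]) ^ v') := by
    exact_mod_cast (((Nat.coprime_primes hq hq').mpr hne).pow v v').cast
  exact (hcop.of_isCoprime_of_dvd_left (saFactor_dvd_natCast_pow hq hϖ hf))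
    |>.of_isCoprime_of_dvd_right (saFactor_dvd_natCast_pow hq' hϖ' hf')

end saFactor

theorem SaElem_eq_prod_saFactor (a : ℕ) (πq : ℕ → ℤ[i]) (f : ℕ → ℕ) :
    SaElem a πq f = ∏ q ∈ a.primeFactors, saFactor (πq q) q (a.factorization q) (f q) := by
  have htwo : ∏ q ∈ a.primeFactors with q = 2, (1 + sqrtd : ℤ[i]) ^ a.factorization q =
      (1 + sqrtd) ^ a.factorization 2 := by
    rw [Finset.prod_filter, Finset.prod_ite_eq']
    split_ifs with h
    · rfl
    · rw [Finsupp.notMem_support_iff.mp (by rwa [Nat.support_factorization]), pow_zero]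
  have hthree : {q ∈ {q ∈ a.primeFactors | ¬q = 2} | q % 4 = 3} =
      {q ∈ a.primeFactors | q % 4 = 3} := by
    rw [Finset.filter_filter]
    exact Finset.filter_congr fun q _ => by omega
  have hone : {q ∈ {q ∈ a.primeFactors | ¬q = 2} | ¬q % 4 = 3} =
      {q ∈ a.primeFactors | q % 4 = 1} := by
    rw [Finset.filter_filter]
    refine Finset.filter_congr fun q hq => ?_
    have := (Nat.prime_of_mem_primeFactors hq).eq_two_or_mod_four_eq_three_or_one
    omega
  simp only [saFactor]
  rw [Finset.prod_ite, Finset.prod_ite, htwo, hthree, hone, SaElem, mul_assoc]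

theorem natCast_dvd_norm_iff_exists_mem_Sa {a : ℕ} (ha : a ≠ 0) {πq : ℕ → ℤ[i]}
    (hπq : ∀ q ∈ a.primeFactors, q % 4 = 1 → πq q * star (πq q) = q) {x : ℤ[i]} (hx : x ≠ 0) :
    (a : ℤ) ∣ x.norm ↔ ∃ α ∈ Sa a πq, α ∣ x := by
  have hprod (f : ℕ → ℕ) (hf : ∀ q, f q ≤ a.factorization q) :
      SaElem a πq f ∣ x ↔
        ∀ q ∈ a.primeFactors, saFactor (πq q) q (a.factorization q) (f q) ∣ x := by
    rw [SaElem_eq_prod_saFactor]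
    refine Finset.prod_dvd_iff_of_pairwise_isCoprime fun q hq q' hq' hne => ?_
    exact isCoprime_saFactor (Nat.prime_of_mem_primeFactors hq)
      (Nat.prime_of_mem_primeFactors hq') hne (hπq q hq) (hπq q' hq') (hf q) (hf q')
  calc (a : ℤ) ∣ x.norm
      ↔ ∀ q ∈ a.primeFactors, (q : ℤ[i]) ^ a.factorization q ∣ x * star x := by
        simp only [Int.natCast_dvd_iff_forall_primeFactors ha, intCast_dvd_norm_iff, Int.cast_pow,
          Int.cast_natCast]
    _ ↔ ∀ q ∈ a.primeFactors, ∃ f ≤ a.factorization q,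
          saFactor (πq q) q (a.factorization q) f ∣ x :=
        forall₂_congr fun q hq => natCast_pow_dvd_mul_star_iff_exists_saFactor_dvd
          (Nat.prime_of_mem_primeFactors hq) (hπq q hq) hx
    _ ↔ ∃ f : ℕ → ℕ, (∀ q, f q ≤ a.factorization q) ∧
          ∀ q ∈ a.primeFactors, saFactor (πq q) q (a.factorization q) (f q) ∣ x :=
        Finset.forall_mem_exists_le_iff
    _ ↔ ∃ α ∈ Sa a πq, α ∣ x := by
        constructor
        · rintro ⟨f, hf, hdvd⟩
          exact ⟨_, ⟨f, hf, rfl⟩, (hprod f hf).mpr hdvd⟩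
        · rintro ⟨_, ⟨f, hf, rfl⟩, hdvd⟩
          exact ⟨f, hf, (hprod f hf).mp hdvd⟩

theorem stmt_6_general (a : ℕ) (ha : 0 < a) (πq : ℕ → GaussianInt)
    (hπq : ∀ q ∈ a.primeFactors, q % 4 = 1 → πq q * star (πq q) = (q : GaussianInt))
    (π : GaussianInt) (hπ : Prime π) :
    (a : ℤ) ∣ Zsqrtd.norm (π - 1) ↔ ∃ α ∈ Sa a πq, α ∣ π - 1 :=
  natCast_dvd_norm_iff_exists_mem_Sa ha.ne' hπq
    (sub_ne_zero.mpr fun h => hπ.not_isUnit (h ▸ isUnit_one))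

/-- For a Gaussian prime `π ≡ 1 (mod (1+i)³)` above a rational prime `p ≡ 1 (mod 4)`,
`a` divides `‖π - 1‖` if and only if some element of `S_a` divides `π - 1` in `ℤ[i]`. -/
theorem stmt_6 (a : ℕ) (ha : 0 < a) (πq : ℕ → GaussianInt)
    (hπq : ∀ q ∈ a.primeFactors, q % 4 = 1 → πq q * star (πq q) = (q : GaussianInt))
    (hπqprime : ∀ q ∈ a.primeFactors, q % 4 = 1 → Prime (πq q))
    (p : ℕ) (hp : p.Prime) (hp4 : p % 4 = 1)
    (π : GaussianInt) (hπ : Prime π) (hπp : π * star π = (p : GaussianInt))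
    (hprimary : (1 + Zsqrtd.sqrtd) ^ 3 ∣ π - 1) :
    (a : ℤ) ∣ Zsqrtd.norm (π - 1) ↔ ∃ α ∈ Sa a πq, α ∣ π - 1 :=
  stmt_6_general a ha πq hπq π hπ
end

section
/- For any positive integer a with prime factorization a = ∏_q q^{v_q}, the set S_a has cardinality ∏_{q ∣ a, q ≡ 1 (mod 4)} (v_q + 1), and in particular |S_a| ≤ τ(a), the number of divisors of a. -/
/-!
After cancelling the common factor `(1+i)^{v_2} ∏_{q ≡ 3 (4)} q^{⌈v_q/2⌉}`, the multiplicity of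
the prime `π_q` (`q ≡ 1 (4)`) in an element of `S_a` is exactly its exponent `f q`: `π_q` divides
neither `π_r`, `π̄_r` for `r ≠ q` (they divide the integer `r`, coprime to `q`), nor `π̄_q`
(`q` is odd, hence unramified). So `S_a` is in bijection with the box `∏_q [0, v_q]`, a sub-box
of the exponent box of the divisors of `a`.
-/

open Finset

theorem emultiplicity_prod_pow_mul_pow {ι R : Type*} [CommMonoidWithZero R] [IsCancelMulZero R]
    {s : Finset ι} {p y : ι → R} {i : ι} (hi : i ∈ s) (hp : Prime (p i))
    (hpp : ∀ j ∈ s, j ≠ i → ¬ p i ∣ p j) (hpy : ∀ j ∈ s, ¬ p i ∣ y j) (e k : ι → ℕ) :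
    emultiplicity (p i) (∏ j ∈ s, p j ^ e j * y j ^ k j) = e i := by
  have hy : ∀ j ∈ s, emultiplicity (p i) (y j) = 0 := fun j hj =>
    emultiplicity_eq_zero.mpr (hpy j hj)
  rw [Finset.emultiplicity_prod hp, Finset.sum_eq_single_of_mem i hi]
  · rw [emultiplicity_mul hp, emultiplicity_pow_self_of_prime hp, emultiplicity_pow hp, hy i hi,
      mul_zero, add_zero]
  · intro j hj hji
    simp [emultiplicity_mul hp, emultiplicity_pow hp, emultiplicity_eq_zero.mpr (hpp j hj hji),
      hy j hj]

theorem not_dvd_of_dvd_natCast_of_coprime {R : Type*} [CommRing R] {p z : R} {q r : ℕ}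
    (hp : ¬ IsUnit p) (hpq : p ∣ (q : R)) (hz : z ∣ (r : R)) (hqr : q.Coprime r) : ¬ p ∣ z :=
  fun hpz => hp ((Nat.Coprime.cast hqr).isUnit_of_dvd' hpq (hpz.trans hz))

namespace GaussianInt

theorem self_add_star (π : GaussianInt) : π + star π = ((2 * π.re : ℤ) : GaussianInt) := by
  ext <;> simp; ring

/-- `π` would divide both `q` and `π + π̄ = 2 Re π`, which are coprime integers. -/
theorem not_dvd_star_of_mul_star_eq_prime {π : GaussianInt} {q : ℕ} (hq : q.Prime) (hq2 : q ≠ 2)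
    (hπ : π * star π = q) (hu : ¬ IsUnit π) : ¬ π ∣ star π := by
  intro hdvd
  have hqZ : Prime (q : ℤ) := Nat.prime_iff_prime_int.mp hq
  have hnorm : π.re * π.re + π.im * π.im = q := by
    have h := congrArg Zsqrtd.re hπ
    simp only [Zsqrtd.re_mul, Zsqrtd.re_star, Zsqrtd.im_star, Zsqrtd.re_natCast] at h
    linarith
  have hre : ¬ (q : ℤ) ∣ π.re := by
    intro hre
    have him : (q : ℤ) ∣ π.im := hqZ.dvd_of_dvd_pow (n := 2) <| by
      rw [sq, show π.im * π.im = q - π.re * π.re by linarith]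
      exact dvd_sub dvd_rfl (hre.mul_right _)
    have hqq : (q : ℤ) * q ∣ π.re * π.re + π.im * π.im :=
      dvd_add (mul_dvd_mul hre hre) (mul_dvd_mul him him)
    rw [hnorm] at hqq
    have := Int.le_of_dvd (by exact_mod_cast hq.pos) hqq
    nlinarith [(show (2 : ℤ) ≤ q by exact_mod_cast hq.two_le)]
  have htwo : ¬ (q : ℤ) ∣ 2 := fun h =>
    hq2 ((Nat.prime_dvd_prime_iff_eq hq Nat.prime_two).mp (by exact_mod_cast h))
  have hcop : IsCoprime ((2 * π.re : ℤ) : GaussianInt) (q : ℤ) :=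
    ((hqZ.coprime_iff_not_dvd.mpr fun h => (hqZ.dvd_mul.mp h).elim htwo hre).symm).intCast
  refine hu (hcop.isUnit_of_dvd' ?_ ?_)
  · rw [← self_add_star]
    exact dvd_add dvd_rfl hdvd
  · rw [Int.cast_natCast, ← hπ]
    exact dvd_mul_right _ _

end GaussianInt

section Sa

variable {a : ℕ} {πq : ℕ → GaussianInt}

theorem SaElem_congr {f f' : ℕ → ℕ} (h : ∀ q ∈ a.primeFactors.filter (· % 4 = 1), f q = f' q) :
    SaElem a πq f = SaElem a πq f' := by
  unfold SaElem
  congr 1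
  exact prod_congr rfl fun q hq => by rw [h q hq]

theorem emultiplicity_prod_split
    (hπq : ∀ q ∈ a.primeFactors, q % 4 = 1 → πq q * star (πq q) = (q : GaussianInt))
    (hπqprime : ∀ q ∈ a.primeFactors, q % 4 = 1 → Prime (πq q))
    {q : ℕ} (hq : q ∈ a.primeFactors.filter (· % 4 = 1)) (f : ℕ → ℕ) :
    emultiplicity (πq q) (∏ r ∈ a.primeFactors.filter (· % 4 = 1),
      πq r ^ f r * star (πq r) ^ (a.factorization r - f r)) = f q := by
  obtain ⟨hqa, hq4⟩ := mem_filter.mp hq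
  have hprime := hπqprime q hqa hq4
  have hdvd : ∀ r ∈ a.primeFactors.filter (· % 4 = 1),
      πq r ∣ (r : GaussianInt) ∧ star (πq r) ∣ (r : GaussianInt) := fun r hr => by
    obtain ⟨hra, hr4⟩ := mem_filter.mp hr
    rw [← hπq r hra hr4]
    exact ⟨dvd_mul_right _ _, dvd_mul_left _ _⟩
  have hcoprime : ∀ r ∈ a.primeFactors.filter (· % 4 = 1), r ≠ q → q.Coprime r := fun r hr hrq =>
    (Nat.coprime_primes (Nat.prime_of_mem_primeFactors hqa)
      (Nat.prime_of_mem_primeFactors (mem_filter.mp hr).1)).mpr hrq.symm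
  refine emultiplicity_prod_pow_mul_pow hq hprime (fun r hr hrq => ?_) (fun r hr => ?_) f _
  · exact not_dvd_of_dvd_natCast_of_coprime hprime.not_isUnit (hdvd q hq).1 (hdvd r hr).1
      (hcoprime r hr hrq)
  · by_cases hrq : r = q
    · subst hrq
      exact GaussianInt.not_dvd_star_of_mul_star_eq_prime (Nat.prime_of_mem_primeFactors hqa)
        (by omega) (hπq r hqa hq4) hprime.not_isUnit
    · exact not_dvd_of_dvd_natCast_of_coprime hprime.not_isUnit (hdvd q hq).1 (hdvd r hr).2
        (hcoprime r hr hrq)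

theorem eq_of_SaElem_eq
    (hπq : ∀ q ∈ a.primeFactors, q % 4 = 1 → πq q * star (πq q) = (q : GaussianInt))
    (hπqprime : ∀ q ∈ a.primeFactors, q % 4 = 1 → Prime (πq q)) {f f' : ℕ → ℕ}
    (h : SaElem a πq f = SaElem a πq f') {q : ℕ} (hq : q ∈ a.primeFactors.filter (· % 4 = 1)) :
    f q = f' q := by
  have hsplit : (∏ r ∈ a.primeFactors.filter (· % 4 = 1),
        πq r ^ f r * star (πq r) ^ (a.factorization r - f r)) =
      ∏ r ∈ a.primeFactors.filter (· % 4 = 1),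
        πq r ^ f' r * star (πq r) ^ (a.factorization r - f' r) := by
    refine mul_left_cancel₀ (mul_ne_zero (pow_ne_zero _ ?_) (prod_ne_zero_iff.mpr fun r hr => ?_)) h
    · simp [Zsqrtd.ext_iff]
    · exact pow_ne_zero _
        (Nat.cast_ne_zero.mpr (Nat.prime_of_mem_primeFactors (mem_filter.mp hr).1).ne_zero)
  have hf := emultiplicity_prod_split hπq hπqprime hq f
  rw [hsplit, emultiplicity_prod_split hπq hπqprime hq f'] at hf
  exact_mod_cast hf.symm

theorem Sa_eq_image : Sa a πq =
    (fun g : ℕ →₀ ℕ => SaElem a πq g) '' ↑(Iic (a.factorization.filter (· % 4 = 1))) := by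
  ext α
  constructor
  · rintro ⟨f, hf, rfl⟩
    refine ⟨Finsupp.indicator (a.primeFactors.filter (· % 4 = 1)) (fun q _ => f q), ?_,
      SaElem_congr fun q hq => by simp [Finsupp.indicator_apply, hq]⟩
    refine mem_Iic.mpr fun q => ?_
    rw [Finsupp.indicator_apply, Finsupp.filter_apply]
    split_ifs with hq hq4
    · exact hf q
    · exact absurd (mem_filter.mp hq).2 hq4
    · exact Nat.zero_le _
    · exact le_rfl
  · rintro ⟨g, hg, rfl⟩
    refine ⟨g, fun q => (mem_Iic.mp hg q).trans ?_, rfl⟩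
    rw [Finsupp.filter_apply]
    split_ifs <;> simp

theorem injOn_SaElem
    (hπq : ∀ q ∈ a.primeFactors, q % 4 = 1 → πq q * star (πq q) = (q : GaussianInt))
    (hπqprime : ∀ q ∈ a.primeFactors, q % 4 = 1 → Prime (πq q)) :
    Set.InjOn (fun g : ℕ →₀ ℕ => SaElem a πq g) ↑(Iic (a.factorization.filter (· % 4 = 1))) := by
  intro g hg g' hg' h
  ext q
  by_cases hq : q ∈ a.primeFactors.filter (· % 4 = 1)
  · exact eq_of_SaElem_eq hπq hπqprime h hq
  · have hzero : a.factorization.filter (· % 4 = 1) q = 0 := Finsupp.notMem_support_iff.mp hq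
    have := mem_Iic.mp hg q
    have := mem_Iic.mp hg' q
    omega

theorem ncard_Sa
    (hπq : ∀ q ∈ a.primeFactors, q % 4 = 1 → πq q * star (πq q) = (q : GaussianInt))
    (hπqprime : ∀ q ∈ a.primeFactors, q % 4 = 1 → Prime (πq q)) :
    (Sa a πq).ncard = ∏ q ∈ a.primeFactors.filter (· % 4 = 1), (a.factorization q + 1) := by
  rw [Sa_eq_image, (injOn_SaElem hπq hπqprime).ncard_image, Set.ncard_coe_finset,
    Finsupp.card_Iic]
  refine prod_congr rfl fun q hq => ?_
  rw [Nat.card_Iic, Finsupp.filter_apply, if_pos (mem_filter.mp hq).2]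

end Sa

/-- `|S_a| = ∏_{q ∣ a, q ≡ 1 (4)} (v_q + 1)`, and in particular `|S_a| ≤ τ(a)`. -/
theorem stmt_7 (a : ℕ) (ha : 0 < a) (πq : ℕ → GaussianInt)
    (hπq : ∀ q ∈ a.primeFactors, q % 4 = 1 → πq q * star (πq q) = (q : GaussianInt))
    (hπqprime : ∀ q ∈ a.primeFactors, q % 4 = 1 → Prime (πq q)) :
    (Sa a πq).ncard
        = ∏ q ∈ a.primeFactors.filter (fun q => q % 4 = 1), (a.factorization q + 1) ∧
      (Sa a πq).ncard ≤ a.divisors.card := by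
  refine ⟨ncard_Sa hπq hπqprime, ?_⟩
  rw [ncard_Sa hπq hπqprime, Nat.card_divisors ha.ne']
  exact prod_le_prod_of_subset_of_one_le' (filter_subset _ _) fun q _ _ => Nat.le_add_left 1 _
end
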